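/- arXiv:2004.01902 — 4 statements merged into one kernel-verified Lean document; each statement's English description precedes it below -/
import Mathlib

section
/- Fix an integer d_r ≥ 2. There exist constants c > 0 and 0 < ε₀ < 1 (depending only on d_r) such that for every 0 < ε < ε₀, every rational neural network R : [−1, 1] → ℝ with M layers, layer widths k_1, …, k_M, and activation functions that are rational functions of degree at most d_r, satisfying max_{x ∈ [−1,1]} |R(x) − ReLU(x)| ≤ ε, must have size k_1 + ⋯ + k_M ≥ c·log(log(1/ε)). -/
open Real Set

/-- ReLU activation. -/
def ReLU (x : ℝ) : ℝ := max x 0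

/-- `f` is a rational function of type `(p, q)` on the set `I`:
`f = P/Q` with `deg P ≤ p`, `deg Q ≤ q` and `Q` has no zeros on `I`. -/
def IsRationalOn (f : ℝ → ℝ) (p q : ℕ) (I : Set ℝ) : Prop :=
  ∃ P Q : Polynomial ℝ, P.natDegree ≤ p ∧ Q.natDegree ≤ q ∧
    (∀ x ∈ I, Q.eval x ≠ 0) ∧ ∀ x ∈ I, f x = P.eval x / Q.eval x

/-- Dot product of two lists of reals. -/
def listDot (u v : List ℝ) : ℝ := ((u.zip v).map fun p => p.1 * p.2).sum

/-- A neuron: an activation function, a vector of weights and a bias. -/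
structure Neuron where
  σ : ℝ → ℝ
  a : List ℝ
  b : ℝ

/-- Output of a neuron given the previous layer `y`: `σ(aᵀy + b)`. -/
def Neuron.eval (n : Neuron) (y : List ℝ) : ℝ := n.σ (listDot n.a y + n.b)

/-- A feed-forward neural network with input dimension `d`: a list of layers
followed by a linear read-out `x ↦ wᵀ y_M + c`. -/
structure NeuralNet (d : ℕ) where
  layers : List (List Neuron)
  w : List ℝ
  c : ℝ

/-- Evaluation of a neural network. -/
def NeuralNet.eval {d : ℕ} (N : NeuralNet d) (x : Fin d → ℝ) : ℝ :=
  listDot N.w (N.layers.foldl (fun y layer => layer.map (fun n => n.eval y)) (List.ofFn x)) + N.c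

/-- The size of a neural network: total number of nodes. -/
def NeuralNet.size {d : ℕ} (N : NeuralNet d) : ℕ := (N.layers.map List.length).sum

/-- The depth of a neural network: number of layers. -/
def NeuralNet.depth {d : ℕ} (N : NeuralNet d) : ℕ := N.layers.length

/-- A ReLU network: every activation function is `ReLU`. -/
def NeuralNet.IsReLU {d : ℕ} (N : NeuralNet d) : Prop :=
  ∀ layer ∈ N.layers, ∀ n ∈ layer, n.σ = ReLU

/-- A rational network: every activation function is a rational function. -/
def NeuralNet.IsRational {d : ℕ} (N : NeuralNet d) : Prop :=
  ∀ layer ∈ N.layers, ∀ n ∈ layer, ∃ p q : ℕ, IsRationalOn n.σ p q Set.univ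

/-!
A neuron applies a rational activation of degree at most `d` to an affine function of the
previous layer; keeping each layer over a common denominator, a network of size `s` computes a
rational function of degree at most `(d + 1) ^ s`.

If `r = p / q` of degree `n` is `ε`-close to ReLU on `[-1, 1]`, then `r x + r (-x) = a / b`, with
`b = q(x) q(-x) > 0`, is `2ε`-close to `|x|`. So `a - X b` is at most `2ε b` on `[0, 1]`, but at
least `b / 2` on `[-1, -1/2]`. Lagrange interpolation at equispaced nodes bounds a polynomial of
degree `E` away from an interval by `(E + 1) (E L / ℓ) ^ E` times its size on the interval; used
once to compare `b` on `[0, 1]` with its maximum on `[-1, -1/2]` and once to carry the smallness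
of `a - X b` from `[0, 1]` back to `[-1, -1/2]`, it gives `1/ε ≤ n ^ O(n)`. Hence
`log log (1/ε) = O(s log (d + 1))`.
-/

open Polynomial

theorem Polynomial.exists_natDegree_le_eval_eq_pow_mul_eval_div {P : ℝ[X]} {d : ℕ}
    (hP : P.natDegree ≤ d) {w v : ℝ[X]} {D : ℕ} (hw : w.natDegree ≤ D) (hv : v.natDegree ≤ D) :
    ∃ H : ℝ[X], H.natDegree ≤ d * D ∧
      ∀ x, v.eval x ≠ 0 → H.eval x = v.eval x ^ d * P.eval (w.eval x / v.eval x) := by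
  refine ⟨∑ k ∈ Finset.range (d + 1), C (P.coeff k) * w ^ k * v ^ (d - k), ?_, fun x hx => ?_⟩
  · refine natDegree_sum_le_of_forall_le _ _ fun k hk => ?_
    have hkd : k ≤ d := Nat.lt_succ_iff.mp (Finset.mem_range.mp hk)
    calc (C (P.coeff k) * w ^ k * v ^ (d - k)).natDegree
        ≤ k * D + (d - k) * D := by
          refine natDegree_mul_le_of_le (natDegree_C_mul_le _ _ |>.trans ?_) ?_
          · exact natDegree_pow_le_of_le k hw
          · exact natDegree_pow_le_of_le _ hv
      _ = d * D := by rw [← add_mul, Nat.add_sub_cancel' hkd]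
  · rw [eval_eq_sum_range' (Nat.lt_succ_of_le hP), Finset.mul_sum, eval_finsetSum]
    refine Finset.sum_congr rfl fun k hk => ?_
    have hkd : k ≤ d := Nat.lt_succ_iff.mp (Finset.mem_range.mp hk)
    rw [eval_mul, eval_mul, eval_C, eval_pow, eval_pow, div_pow, ← Nat.add_sub_cancel' hkd,
      pow_add, Nat.add_sub_cancel_left]
    field_simp

theorem IsRationalOn.comp {σ g : ℝ → ℝ} {d D : ℕ} {I J : Set ℝ} (hσ : IsRationalOn σ d d J)
    (hg : IsRationalOn g D D I) (hgIJ : MapsTo g I J) :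
    IsRationalOn (fun x => σ (g x)) (d * D) (d * D) I := by
  obtain ⟨P, Q, hP, hQ, hQ0, hσPQ⟩ := hσ
  obtain ⟨w, v, hw, hv, hv0, hgwv⟩ := hg
  obtain ⟨HP, hHP, hHP_eval⟩ := exists_natDegree_le_eval_eq_pow_mul_eval_div hP hw hv
  obtain ⟨HQ, hHQ, hHQ_eval⟩ := exists_natDegree_le_eval_eq_pow_mul_eval_div hQ hw hv
  refine ⟨HP, HQ, hHP, hHQ, fun x hx => ?_, fun x hx => ?_⟩
  · rw [hHQ_eval x (hv0 x hx), ← hgwv x hx]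
    exact mul_ne_zero (pow_ne_zero _ (hv0 x hx)) (hQ0 _ (hgIJ hx))
  · rw [hHP_eval x (hv0 x hx), hHQ_eval x (hv0 x hx),
      mul_div_mul_left _ _ (pow_ne_zero _ (hv0 x hx)), ← hgwv x hx]
    exact hσPQ _ (hgIJ hx)

/-- The common denominator is what keeps affine combinations of the list at degree `D`. -/
def IsRationalListOn (ys : ℝ → List ℝ) (D : ℕ) (I : Set ℝ) : Prop :=
  ∃ (us : List ℝ[X]) (v : ℝ[X]), (∀ u ∈ us, u.natDegree ≤ D) ∧ v.natDegree ≤ D ∧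
    (∀ x ∈ I, v.eval x ≠ 0) ∧ ∀ x ∈ I, ys x = us.map fun u => u.eval x / v.eval x

theorem listDot_map_div (w l : List ℝ) (c : ℝ) :
    listDot w (l.map (· / c)) = listDot w l / c := by
  induction w generalizing l with
  | nil => simp [listDot]
  | cons a w ih =>
    cases l with
    | nil => simp [listDot]
    | cons y l =>
      have := ih l
      simp only [listDot, List.zip_cons_cons, List.map_cons, List.sum_cons] at this ⊢
      rw [this, add_div, mul_div_assoc]

theorem exists_natDegree_le_eval_eq_listDot (w : List ℝ) {us : List ℝ[X]} {D : ℕ}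
    (hus : ∀ u ∈ us, u.natDegree ≤ D) :
    ∃ P : ℝ[X], P.natDegree ≤ D ∧ ∀ x, P.eval x = listDot w (us.map (·.eval x)) := by
  induction w generalizing us with
  | nil => exact ⟨0, by simp, by simp [listDot]⟩
  | cons a w ih =>
    cases us with
    | nil => exact ⟨0, by simp, by simp [listDot]⟩
    | cons u us =>
      obtain ⟨P, hP, hPeval⟩ := ih fun u hu => hus u (List.mem_cons_of_mem _ hu)
      refine ⟨C a * u + P, natDegree_add_le_of_degree_le ?_ hP, fun x => ?_⟩
      · exact (natDegree_C_mul_le _ _).trans (hus u List.mem_cons_self)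
      · have := hPeval x
        simp only [listDot, List.zip_cons_cons, List.map_cons, List.sum_cons] at this ⊢
        rw [eval_add, eval_mul, eval_C, this]

namespace IsRationalListOn

variable {ys : ℝ → List ℝ} {D : ℕ} {I : Set ℝ}

theorem nil : IsRationalListOn (fun _ => []) 0 I :=
  ⟨[], 1, by simp, by simp, by simp, by simp⟩

theorem mono (h : IsRationalListOn ys D I) {D' : ℕ} (hD : D ≤ D') : IsRationalListOn ys D' I := by
  obtain ⟨us, v, hus, hv, hv0, hys⟩ := h
  exact ⟨us, v, fun u hu => (hus u hu).trans hD, hv.trans hD, hv0, hys⟩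

theorem cons {f : ℝ → ℝ} {D₁ : ℕ} (hf : IsRationalOn f D₁ D₁ I) (h : IsRationalListOn ys D I) :
    IsRationalListOn (fun x => f x :: ys x) (D₁ + D) I := by
  obtain ⟨p, q, hp, hq, hq0, hfpq⟩ := hf
  obtain ⟨us, v, hus, hv, hv0, hys⟩ := h
  refine ⟨p * v :: us.map (q * ·), q * v, ?_, natDegree_mul_le_of_le hq hv,
    fun x hx => by simpa using mul_ne_zero (hq0 x hx) (hv0 x hx), fun x hx => ?_⟩
  · simp only [List.mem_cons, List.mem_map]
    rintro _ (rfl | ⟨u, hu, rfl⟩)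
    · exact natDegree_mul_le_of_le hp hv
    · exact natDegree_mul_le_of_le hq (hus u hu)
  · simp only [hfpq x hx, hys x hx, List.map_cons, List.map_map, eval_mul]
    congr 1
    · exact (mul_div_mul_right _ _ (hv0 x hx)).symm
    · exact List.map_congr_left fun u _ => by
        simp only [Function.comp_apply, eval_mul, mul_div_mul_left _ _ (hq0 x hx)]

theorem affine (h : IsRationalListOn ys D I) (w : List ℝ) (c : ℝ) :
    IsRationalOn (fun x => listDot w (ys x) + c) D D I := by
  obtain ⟨us, v, hus, hv, hv0, hys⟩ := h
  obtain ⟨P, hP, hPeval⟩ := exists_natDegree_le_eval_eq_listDot w hus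
  refine ⟨P + C c * v, v, natDegree_add_le_of_degree_le hP ((natDegree_C_mul_le _ _).trans hv),
    hv, hv0, fun x hx => ?_⟩
  have hmap : (us.map fun u => u.eval x / v.eval x) = (us.map (·.eval x)).map (· / v.eval x) := by
    simp [List.map_map, Function.comp_def]
  show listDot w (ys x) + c = _
  rw [hys x hx, hmap, listDot_map_div, ← hPeval, eval_add, eval_mul, eval_C, add_div,
    mul_div_cancel_right₀ _ (hv0 x hx)]

theorem map_eval {layer : List Neuron} {d : ℕ}
    (hlayer : ∀ n ∈ layer, IsRationalOn n.σ d d univ) (h : IsRationalListOn ys D I) :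
    IsRationalListOn (fun x => layer.map (·.eval (ys x))) (layer.length * (d * D)) I := by
  induction layer with
  | nil => exact nil.mono (Nat.zero_le _)
  | cons n layer ih =>
    have hn : IsRationalOn (fun x => n.eval (ys x)) (d * D) (d * D) I :=
      (hlayer n List.mem_cons_self).comp (h.affine n.a n.b) (mapsTo_univ _ _)
    have := cons hn (ih fun m hm => hlayer m (List.mem_cons_of_mem _ hm))
    rwa [List.length_cons, Nat.succ_mul, Nat.add_comm]

theorem foldl_map_eval {layers : List (List Neuron)} {d : ℕ}
    (hlayers : ∀ layer ∈ layers, ∀ n ∈ layer, IsRationalOn n.σ d d univ)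
    (h : IsRationalListOn ys D I) :
    IsRationalListOn (fun x => layers.foldl (fun y layer => layer.map (·.eval y)) (ys x))
      (D * (d + 1) ^ (layers.map List.length).sum) I := by
  induction layers generalizing ys D with
  | nil => simpa using h
  | cons layer layers ih =>
    have hbernoulli : layer.length * d ≤ (d + 1) ^ layer.length := by
      have : 1 + layer.length * d ≤ (1 + d) ^ layer.length := by
        exact_mod_cast one_add_mul_le_pow (a := (d : ℤ)) (by omega) layer.length
      rw [Nat.add_comm d]; omega
    have hstep := (h.map_eval (hlayers layer List.mem_cons_self)).mono <| calc
      layer.length * (d * D) = layer.length * d * D := (Nat.mul_assoc ..).symm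
      _ ≤ (d + 1) ^ layer.length * D := Nat.mul_le_mul_right D hbernoulli
      _ = D * (d + 1) ^ layer.length := Nat.mul_comm ..
    have := ih (fun l hl => hlayers l (List.mem_cons_of_mem _ hl)) hstep
    simpa only [List.foldl_cons, List.map_cons, List.sum_cons, pow_add, Nat.mul_assoc] using this

end IsRationalListOn

theorem NeuralNet.isRationalOn_eval (R : NeuralNet 1) {d : ℕ}
    (hR : ∀ layer ∈ R.layers, ∀ n ∈ layer, IsRationalOn n.σ d d univ) (I : Set ℝ) :
    IsRationalOn (fun x => R.eval fun _ => x) ((d + 1) ^ R.size) ((d + 1) ^ R.size) I := by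
  have hinput : IsRationalListOn (fun x => List.ofFn fun _ : Fin 1 => x) 1 I :=
    ⟨[(X : ℝ[X])], 1, by simp, by simp, by simp, by simp⟩
  simpa [NeuralNet.eval, NeuralNet.size] using
    (hinput.foldl_map_eval hR).affine R.w R.c

namespace Lagrange

open Finset

variable {ι : Type*} [DecidableEq ι] {s : Finset ι} {v : ι → ℝ} {h L t : ℝ}

theorem abs_eval_basis_le (hh : 0 < h) (hsep : ∀ i ∈ s, ∀ j ∈ s, i ≠ j → h ≤ |v i - v j|)
    (hL : ∀ j ∈ s, |t - v j| ≤ L) {i : ι} (hi : i ∈ s) :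
    |(Lagrange.basis s v i).eval t| ≤ (L / h) ^ (#s - 1) := by
  rw [Lagrange.basis, eval_prod, abs_prod, ← card_erase_of_mem hi, ← prod_const]
  refine prod_le_prod (fun _ _ => abs_nonneg _) fun j hj => ?_
  obtain ⟨hji, hj⟩ := mem_erase.mp hj
  have hsep' := hsep i hi j hj (Ne.symm hji)
  rw [basisDivisor, eval_mul, eval_C, eval_sub, eval_X, eval_C, abs_mul, abs_inv, inv_mul_eq_div]
  exact div_le_div₀ ((abs_nonneg _).trans (hL j hj)) (hL j hj) hh hsep'

theorem abs_eval_le (hh : 0 < h) (hsep : ∀ i ∈ s, ∀ j ∈ s, i ≠ j → h ≤ |v i - v j|)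
    (hL : ∀ j ∈ s, |t - v j| ≤ L) {P : ℝ[X]} (hP : P.degree < #s) {A : ℝ}
    (hA : ∀ i ∈ s, |P.eval (v i)| ≤ A) :
    |P.eval t| ≤ #s * (L / h) ^ (#s - 1) * A := by
  have hinj : Set.InjOn v s := fun i hi j hj hij => by
    by_contra hne
    have := hsep i hi j hj hne
    rw [hij, sub_self, abs_zero] at this
    linarith
  rw [eq_interpolate hinj hP, interpolate_apply, eval_finsetSum, mul_assoc, ← nsmul_eq_mul,
    ← sum_const]
  refine (abs_sum_le_sum_abs _ _).trans (sum_le_sum fun i hi => ?_)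
  rw [eval_mul, eval_C, abs_mul, mul_comm]
  exact mul_le_mul (abs_eval_basis_le hh hsep hL hi) (hA i hi) (abs_nonneg _)
    (pow_nonneg ((abs_nonneg _).trans (hL i hi) |> (div_nonneg · hh.le)) _)

end Lagrange

theorem Polynomial.abs_eval_le_of_abs_eval_le_Icc {P : ℝ[X]} {m : ℕ} (hP : P.natDegree ≤ m)
    {α β A L t : ℝ} (hαβ : α < β) (hA : ∀ y ∈ Icc α β, |P.eval y| ≤ A)
    (hL : ∀ y ∈ Icc α β, |t - y| ≤ L) :
    |P.eval t| ≤ (m + 1) * (m * L / (β - α)) ^ m * A := by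
  rcases Nat.eq_zero_or_pos m with rfl | hm
  · rw [eq_C_of_natDegree_le_zero hP] at hA ⊢
    simpa using hA α (left_mem_Icc.mpr hαβ.le)
  have hm' : (0 : ℝ) < m := Nat.cast_pos.mpr hm
  have hh : 0 < (β - α) / m := div_pos (sub_pos.mpr hαβ) hm'
  set node : ℕ → ℝ := fun k => α + k * ((β - α) / m)
  have hnode : ∀ k ∈ Finset.range (m + 1), node k ∈ Icc α β := fun k hk => by
    have hk : (k : ℝ) ≤ m := by exact_mod_cast Nat.lt_succ_iff.mp (Finset.mem_range.mp hk)
    refine ⟨le_add_of_nonneg_right (by positivity), ?_⟩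
    calc node k ≤ α + m * ((β - α) / m) := by simp only [node]; gcongr
      _ = β := by field_simp; ring
  have hsep : ∀ i ∈ Finset.range (m + 1), ∀ j ∈ Finset.range (m + 1), i ≠ j →
      (β - α) / m ≤ |node i - node j| := fun i _ j _ hij => by
    have hij' : (1 : ℝ) ≤ |(i : ℝ) - j| := by
      rw [← Int.cast_natCast i, ← Int.cast_natCast j, ← Int.cast_sub, ← Int.cast_abs]
      exact_mod_cast Int.one_le_abs (sub_ne_zero.mpr (Int.natCast_inj.not.mpr hij))
    calc (β - α) / m ≤ |(i : ℝ) - j| * ((β - α) / m) := le_mul_of_one_le_left hh.le hij'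
      _ = |node i - node j| := by
        rw [← abs_of_pos hh, ← abs_mul]
        simp only [node]
        ring_nf
  have := Lagrange.abs_eval_le hh hsep (fun j hj => hL _ (hnode j hj))
    (P := P) (by rw [Finset.card_range]; exact (degree_le_natDegree.trans_lt
      (by exact_mod_cast Nat.lt_succ_of_le hP))) (fun i hi => hA _ (hnode i hi))
  rwa [Finset.card_range, Nat.add_sub_cancel, Nat.cast_add_one, div_div_eq_mul_div,
    mul_comm L] at this

theorem Polynomial.half_le_abs_eval_sub_X_mul {a b : ℝ[X]} {x δ : ℝ} (hx : x ≤ -1 / 2)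
    (hb : 0 < b.eval x) (hδ : δ ≤ 1 / 2) (happ : |a.eval x - |x| * b.eval x| ≤ δ * b.eval x) :
    b.eval x / 2 ≤ |(a - X * b).eval x| := by
  have hclose := (neg_le_neg happ).trans (neg_abs_le _)
  rw [abs_of_neg (by linarith)] at hclose
  -- `|x| - x = -2x ≥ 1` on the left, so there `a - X b` is about `-2x b`
  have hfar : b.eval x ≤ (-2 * x) * b.eval x := le_mul_of_one_le_left hb.le (by linarith)
  have hsplit : (a - X * b).eval x = (a.eval x - -x * b.eval x) + (-2 * x) * b.eval x := by
    simp only [eval_sub, eval_mul, eval_X]; ring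
  rw [hsplit]
  refine le_trans ?_ (le_abs_self _)
  linarith [mul_le_mul_of_nonneg_right hδ hb.le]

theorem Polynomial.one_le_of_approx_abs {a b : ℝ[X]} {E : ℕ} (hab : (a - X * b).natDegree ≤ E)
    (hb : b.natDegree ≤ E) (hbpos : ∀ x ∈ Icc (-1 : ℝ) 1, 0 < b.eval x) {δ : ℝ} (hδ : δ ≤ 1 / 2)
    (happ : ∀ x ∈ Icc (-1 : ℝ) 1, |a.eval x - |x| * b.eval x| ≤ δ * b.eval x) :
    1 ≤ 2 * δ * ((E + 1) ^ 2 * (8 * E ^ 2) ^ E) := by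
  have hδ0 : 0 ≤ δ := by
    have h0 : (0 : ℝ) ∈ Icc (-1 : ℝ) 1 := by norm_num
    exact nonneg_of_mul_nonneg_left ((abs_nonneg _).trans (happ 0 h0)) (hbpos 0 h0)
  have hleft : Icc (-1 : ℝ) (-1 / 2) ⊆ Icc (-1) 1 := Icc_subset_Icc le_rfl (by norm_num)
  have hright : Icc (0 : ℝ) 1 ⊆ Icc (-1) 1 := Icc_subset_Icc (by norm_num) le_rfl
  obtain ⟨z, hz, hzmax⟩ := isCompact_Icc.exists_isMaxOn
    (nonempty_Icc.mpr (by norm_num : (-1 : ℝ) ≤ -1 / 2)) b.continuous.continuousOn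
  have hbz : 0 < b.eval z := hbpos z (hleft hz)
  have hb_right : ∀ y ∈ Icc (0 : ℝ) 1, b.eval y ≤ (E + 1) * (4 * E) ^ E * b.eval z := by
    intro y hy
    have := abs_eval_le_of_abs_eval_le_Icc hb (by norm_num : (-1 : ℝ) < -1 / 2) (L := 2) (t := y)
      (fun x hx => (abs_of_pos (hbpos x (hleft hx))).trans_le (hzmax hx))
      (fun x hx => abs_le.mpr ⟨by linarith [hx.2, hy.1], by linarith [hx.1, hy.2]⟩)
    calc b.eval y ≤ |b.eval y| := le_abs_self _
      _ ≤ _ := this.trans_eq (by ring)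
  have hdiff_right : ∀ y ∈ Icc (0 : ℝ) 1,
      |(a - X * b).eval y| ≤ δ * ((E + 1) * (4 * E) ^ E * b.eval z) := by
    intro y hy
    have := happ y (hright hy)
    rw [abs_of_nonneg hy.1] at this
    rw [eval_sub, eval_mul, eval_X]
    exact this.trans (mul_le_mul_of_nonneg_left (hb_right y hy) hδ0)
  have hdiff_z_le : |(a - X * b).eval z| ≤
      (E + 1) * (2 * E) ^ E * (δ * ((E + 1) * (4 * E) ^ E * b.eval z)) := by
    have := abs_eval_le_of_abs_eval_le_Icc hab (by norm_num : (0 : ℝ) < 1) (L := 2) (t := z)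
      hdiff_right
      (fun x hx => abs_le.mpr ⟨by linarith [hx.2, hz.1], by linarith [hx.1, hz.2]⟩)
    exact this.trans_eq (by ring)
  have hdiff_z_ge : b.eval z / 2 ≤ |(a - X * b).eval z| :=
    half_le_abs_eval_sub_X_mul hz.2 hbz hδ (happ z (hleft hz))
  have : b.eval z * 1 ≤ b.eval z * (2 * δ * ((E + 1) ^ 2 * (8 * E ^ 2) ^ E)) := by
    have h8 : (8 * (E : ℝ) ^ 2) ^ E = (2 * E) ^ E * (4 * E) ^ E := by rw [← mul_pow]; ring
    rw [h8]
    linarith [hdiff_z_ge.trans hdiff_z_le]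
  exact le_of_mul_le_mul_left this hbz

theorem IsPreconnected.mul_pos_of_forall_ne_zero {α : Type*} [TopologicalSpace α] {S : Set α}
    (hS : IsPreconnected S) {f : α → ℝ} (hf : ContinuousOn f S) (hf0 : ∀ x ∈ S, f x ≠ 0)
    {x y : α} (hx : x ∈ S) (hy : y ∈ S) : 0 < f x * f y := by
  by_contra! h
  rcases mul_nonpos_iff.mp h with ⟨hx0, hy0⟩ | ⟨hx0, hy0⟩
  · obtain ⟨z, hz, hfz⟩ := hS.intermediate_value₂ hy hx hf continuousOn_const hy0 hx0
    exact hf0 z hz hfz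
  · obtain ⟨z, hz, hfz⟩ := hS.intermediate_value₂ hx hy hf continuousOn_const hx0 hy0
    exact hf0 z hz hfz

theorem ReLU_add_ReLU_neg (x : ℝ) : ReLU x + ReLU (-x) = |x| := by
  rcases le_total 0 x with hx | hx
  · simp [ReLU, hx, abs_of_nonneg hx]
  · simp [ReLU, hx, abs_of_nonpos hx]

theorem IsRationalOn.exists_approx_abs_of_approx_ReLU {f : ℝ → ℝ} {n : ℕ}
    (hf : IsRationalOn f n n (Icc (-1) 1)) {ε : ℝ}
    (happ : ∀ x ∈ Icc (-1 : ℝ) 1, |f x - ReLU x| ≤ ε) :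
    ∃ a b : ℝ[X], (a - X * b).natDegree ≤ 2 * n + 1 ∧ b.natDegree ≤ 2 * n + 1 ∧
      (∀ x ∈ Icc (-1 : ℝ) 1, 0 < b.eval x) ∧
      ∀ x ∈ Icc (-1 : ℝ) 1, |a.eval x - |x| * b.eval x| ≤ 2 * ε * b.eval x := by
  obtain ⟨p, q, hp, hq, hq0, hfpq⟩ := hf
  have hneg : ∀ x ∈ Icc (-1 : ℝ) 1, -x ∈ Icc (-1 : ℝ) 1 := fun x hx =>
    ⟨by linarith [hx.2], by linarith [hx.1]⟩
  have hdeg_neg : ∀ r : ℝ[X], (r.comp (-X)).natDegree ≤ r.natDegree := fun r =>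
    natDegree_comp_le.trans_eq (by simp)
  -- `a / b = f x + f (-x)`, which approximates `ReLU x + ReLU (-x) = |x|`
  set a := p * q.comp (-X) + p.comp (-X) * q
  set b := q * q.comp (-X)
  have hb : ∀ x ∈ Icc (-1 : ℝ) 1, 0 < b.eval x := fun x hx => by
    simpa [b] using isPreconnected_Icc.mul_pos_of_forall_ne_zero q.continuous.continuousOn hq0 hx
      (hneg x hx)
  have happ' : ∀ x ∈ Icc (-1 : ℝ) 1, |a.eval x - |x| * b.eval x| ≤ 2 * ε * b.eval x := by
    intro x hx
    have hsplit : a.eval x - |x| * b.eval x =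
        ((f x - ReLU x) + (f (-x) - ReLU (-x))) * b.eval x := by
      rw [← ReLU_add_ReLU_neg, hfpq x hx, hfpq (-x) (hneg x hx)]
      simp only [a, b, eval_add, eval_mul, eval_comp, eval_neg, eval_X]
      field_simp [hq0 x hx, hq0 (-x) (hneg x hx)]
      ring
    rw [hsplit, abs_mul, abs_of_pos (hb x hx)]
    refine mul_le_mul_of_nonneg_right ?_ (hb x hx).le
    linarith [abs_add_le (f x - ReLU x) (f (-x) - ReLU (-x)), happ x hx, happ (-x) (hneg x hx)]
  refine ⟨a, b, (natDegree_sub_le_of_le ?_ ?_).trans (max_self _).le,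
    (natDegree_mul_le_of_le hq ((hdeg_neg q).trans hq)).trans (by omega), hb, happ'⟩
  · exact natDegree_add_le_of_degree_le (natDegree_mul_le_of_le hp ((hdeg_neg q).trans hq))
      ((natDegree_mul_le_of_le ((hdeg_neg p).trans hp) hq).trans (by omega)) |>.trans (by omega)
  · exact (natDegree_mul_le_of_le natDegree_X_le (natDegree_mul_le_of_le hq
      ((hdeg_neg q).trans hq))).trans (by omega)

theorem IsRationalOn.one_le_mul_of_abs_sub_ReLU_le {f : ℝ → ℝ} {n : ℕ}
    (hf : IsRationalOn f n n (Icc (-1) 1)) {ε : ℝ} (hε : ε ≤ 1 / 4)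
    (happ : ∀ x ∈ Icc (-1 : ℝ) 1, |f x - ReLU x| ≤ ε) :
    1 ≤ ε * (32 * (n + 1) ^ 2) ^ (2 * n + 2) := by
  obtain ⟨a, b, hab_deg, hb_deg, hb, happ'⟩ := hf.exists_approx_abs_of_approx_ReLU happ
  have hε0 : 0 ≤ ε := (abs_nonneg _).trans (happ 0 (by norm_num))
  have hK : (8 * ((2 * n + 1 : ℕ) : ℝ) ^ 2) ^ (2 * n + 1) ≤ (32 * (n + 1) ^ 2) ^ (2 * n + 1) :=
    pow_le_pow_left₀ (by positivity) (by push_cast; nlinarith [Nat.cast_nonneg (α := ℝ) n]) _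
  calc (1 : ℝ) ≤ 2 * (2 * ε) * ((((2 * n + 1 : ℕ) : ℝ) + 1) ^ 2 *
        (8 * ((2 * n + 1 : ℕ) : ℝ) ^ 2) ^ (2 * n + 1)) :=
        one_le_of_approx_abs hab_deg hb_deg hb (by linarith) happ'
    _ = ε * (16 * (n + 1) ^ 2 * (8 * ((2 * n + 1 : ℕ) : ℝ) ^ 2) ^ (2 * n + 1)) := by
        push_cast; ring
    _ ≤ ε * (32 * (n + 1) ^ 2 * (32 * (n + 1) ^ 2) ^ (2 * n + 1)) := by gcongr; linarith
    _ = ε * (32 * (n + 1) ^ 2) ^ (2 * n + 2) := by rw [← pow_succ']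

theorem log_inv_le_of_one_le_mul {ε : ℝ} (hε : 0 < ε) {n : ℕ} (hn : 1 ≤ n)
    (h : 1 ≤ ε * (32 * (n + 1) ^ 2) ^ (2 * n + 2)) : Real.log (1 / ε) ≤ 512 * n ^ 3 := by
  have hn' : (1 : ℝ) ≤ n := by exact_mod_cast hn
  have hK : (0 : ℝ) < 32 * (n + 1) ^ 2 := by positivity
  calc Real.log (1 / ε) ≤ Real.log ((32 * (n + 1) ^ 2) ^ (2 * n + 2)) :=
        Real.log_le_log (by positivity) (by rwa [div_le_iff₀ hε, mul_comm])
    _ = (2 * n + 2 : ℕ) * Real.log (32 * (n + 1) ^ 2) := Real.log_pow _ _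
    _ ≤ (2 * n + 2 : ℕ) * (32 * (n + 1) ^ 2) := by gcongr; exact Real.log_le_self hK.le
    _ = 64 * (n + 1) ^ 3 := by push_cast; ring
    _ ≤ 64 * (2 * n) ^ 3 := by gcongr; linarith
    _ = 512 * n ^ 3 := by ring

theorem log_inv_le_pow_of_one_le_mul {ε : ℝ} (hε : 0 < ε) {d s : ℕ} (hd : 2 ≤ d)
    (h : 1 ≤ ε * (32 * (((d + 1) ^ s : ℕ) + 1) ^ 2) ^ (2 * (d + 1) ^ s + 2)) :
    Real.log (1 / ε) ≤ (d + 1) ^ (6 + 3 * s) := by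
  refine (log_inv_le_of_one_le_mul hε (Nat.one_le_pow _ _ d.succ_pos) h).trans ?_
  rw [pow_add, pow_mul', Nat.cast_pow, Nat.cast_add_one]
  gcongr
  calc (512 : ℝ) ≤ 3 ^ 6 := by norm_num
    _ ≤ _ := pow_le_pow_left₀ (by norm_num) (by norm_cast; omega) 6

/-- Lower bound: for fixed `d_r ≥ 2` there are `c > 0` and `0 < ε₀ < 1` such that any
rational network (activations of degree at most `d_r`) that `ε`-approximates `ReLU` on
`[-1,1]`, for `0 < ε < ε₀`, has size at least `c·log(log(1/ε))`. -/
theorem rational_network_relu_lower_bound (dr : ℕ) (hdr : 2 ≤ dr) :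
    ∃ c > (0 : ℝ), ∃ ε₀ : ℝ, 0 < ε₀ ∧ ε₀ < 1 ∧
      ∀ ε : ℝ, 0 < ε → ε < ε₀ →
        ∀ R : NeuralNet 1,
          (∀ layer ∈ R.layers, ∀ n ∈ layer, IsRationalOn n.σ dr dr Set.univ) →
          (∀ x ∈ Set.Icc (-1 : ℝ) 1, |R.eval (fun _ => x) - ReLU x| ≤ ε) →
          c * Real.log (Real.log (1 / ε)) ≤ (R.size : ℝ) := by
  have hdr3 : (3 : ℝ) ≤ dr + 1 := by norm_cast; omega
  set L := Real.log (dr + 1)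
  have hL : 0 < L := Real.log_pos (by linarith)
  refine ⟨1 / (6 * L), by positivity, Real.exp (-(dr + 1) ^ 12), Real.exp_pos _,
    Real.exp_lt_one_iff.mpr (by simp; positivity), fun ε hε hε₀ R hR happ => ?_⟩
  have hbig : ((dr + 1) ^ 12 : ℝ) < Real.log (1 / ε) := by
    rw [one_div, Real.log_inv, lt_neg]; exact (Real.log_lt_iff_lt_exp hε).mpr hε₀
  have hε4 : ε ≤ 1 / 4 := by
    have := hbig.trans_le (Real.log_le_sub_one_of_pos (by positivity))
    rw [lt_sub_iff_add_lt, lt_div_iff₀ hε] at this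
    nlinarith [pow_le_pow_left₀ (by norm_num) hdr3 12]
  have herr := (R.isRationalOn_eval hR (Icc (-1) 1)).one_le_mul_of_abs_sub_ReLU_le hε4 happ
  have hup : Real.log (Real.log (1 / ε)) ≤ (6 + 3 * R.size) * L := by
    have := Real.log_le_log ((by positivity : (0 : ℝ) < _).trans hbig)
      (log_inv_le_pow_of_one_le_mul hε hdr herr)
    rwa [Real.log_pow, Nat.cast_add, Nat.cast_mul] at this
  have hdown : 12 * L < Real.log (Real.log (1 / ε)) := by
    have := Real.log_lt_log (by positivity) hbig
    rwa [Real.log_pow, Nat.cast_ofNat] at this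
  rw [div_mul_eq_mul_div, one_mul, div_le_iff₀ (by positivity)]
  nlinarith
end

section
/- Let n ≥ 1, r_P ≥ 2, and r_Q ≥ 0 be integers. There exists a rational neural network R : ℝ → ℝ, whose activation functions are rational functions of type at most (r_P, r_Q) on ℝ, of size at most 5·⌊log_{r_P}(n)⌋² + 1, such that R(x) = x^n for all x ∈ ℝ. -/
open Real Set

/-! ### Auxiliary constructions -/

/-- Neuron with activation `t ↦ c * t^k`, weights `a`, bias `0`. -/
def pN (c : ℝ) (k : ℕ) (a : List ℝ) : Neuron := ⟨fun t => c * t ^ k, a, 0⟩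

lemma pN_rat (c : ℝ) (k p q : ℕ) (hk : k ≤ p) :
    IsRationalOn (pN c k a).σ p q Set.univ := by
  refine ⟨Polynomial.C c * Polynomial.X ^ k, 1, ?_, ?_, ?_, ?_⟩
  · exact (Polynomial.natDegree_C_mul_le _ _).trans (by simpa using hk)
  · simp
  · intro x _; simp
  · intro x _; simp [pN]

/-- Processing block for one digit `d`: maps state `[u, v, x]` with `(u-v)/4 = x^e`
to `[u', v', x]` with `(u'-v')/4 = x^(e*rP + d)`. -/
noncomputable def block (rP d : ℕ) : List (List Neuron) :=
  [[pN 1 rP [4⁻¹, -4⁻¹, 0], pN 1 d [0, 0, 1], pN 1 1 [0, 0, 1]],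
   [pN 1 2 [1, 1, 0], pN 1 2 [1, -1, 0], pN 1 1 [0, 0, 1]]]

noncomputable def blocks (rP : ℕ) : List ℕ → List (List Neuron)
  | [] => []
  | d :: ds => block rP d ++ blocks rP ds

lemma blocks_size (rP : ℕ) (ds : List ℕ) :
    ((blocks rP ds).map List.length).sum = 6 * ds.length := by
  induction ds with
  | nil => simp [blocks]
  | cons d ds ih => simp [blocks, block, ih]; ring

lemma blocks_mem (rP : ℕ) (ds : List ℕ) {layer : List Neuron} {ne : Neuron}
    (hl : layer ∈ blocks rP ds) (hne : ne ∈ layer) :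
    ∃ c : ℝ, ∃ k : ℕ, (k ≤ rP ∨ k ≤ 2 ∨ k ∈ ds) ∧ ne.σ = (pN c k []).σ := by
  induction ds with
  | nil => simp [blocks] at hl
  | cons d ds ih =>
    simp only [blocks, List.mem_append] at hl
    rcases hl with hl | hl
    · simp only [block, List.mem_cons, List.not_mem_nil, or_false] at hl
      rcases hl with rfl | rfl
      · simp only [List.mem_cons, List.not_mem_nil, or_false] at hne
        rcases hne with rfl | rfl | rfl
        · exact ⟨1, rP, Or.inl le_rfl, rfl⟩
        · exact ⟨1, d, Or.inr (Or.inr (by simp)), rfl⟩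
        · exact ⟨1, 1, Or.inr (Or.inl one_le_two), rfl⟩
      · simp only [List.mem_cons, List.not_mem_nil, or_false] at hne
        rcases hne with rfl | rfl | rfl
        · exact ⟨1, 2, Or.inr (Or.inl le_rfl), rfl⟩
        · exact ⟨1, 2, Or.inr (Or.inl le_rfl), rfl⟩
        · exact ⟨1, 1, Or.inr (Or.inl one_le_two), rfl⟩
    · obtain ⟨c, k, hk, hσ⟩ := ih hl
      exact ⟨c, k, by tauto, hσ⟩

lemma block_eval (rP d : ℕ) (u v x : ℝ) (e : ℕ) (h : (u - v) / 4 = x ^ e) :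
    (block rP d).foldl (fun y layer => layer.map (fun n => n.eval y)) [u, v, x]
      = [((x ^ e) ^ rP + x ^ d) ^ 2, ((x ^ e) ^ rP - x ^ d) ^ 2, x] := by
  have hs : (4⁻¹ * u + (-4⁻¹ * v + (0 * x + 0)) + 0 : ℝ) = x ^ e := by rw [← h]; ring
  simp only [block, List.foldl_cons, List.foldl_nil, List.map_cons, List.map_nil,
    Neuron.eval, pN, listDot, List.zip_cons_cons, List.zip_nil_left, List.zip_nil_right,
    List.sum_cons, List.sum_nil, one_mul, pow_one]
  rw [hs]
  norm_num
  ring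

lemma blocks_eval (rP : ℕ) (ds : List ℕ) (x : ℝ) :
    ∀ (u v : ℝ) (e : ℕ), (u - v) / 4 = x ^ e →
    ∃ u' v' : ℝ,
      (blocks rP ds).foldl (fun y layer => layer.map (fun n => n.eval y)) [u, v, x]
        = [u', v', x] ∧ (u' - v') / 4 = x ^ (ds.foldl (fun a d => a * rP + d) e) := by
  induction ds with
  | nil => intro u v e h; exact ⟨u, v, rfl, h⟩
  | cons d ds ih =>
    intro u v e h
    have hb := block_eval rP d u v x e h
    have h' : ((((x ^ e) ^ rP + x ^ d) ^ 2) - (((x ^ e) ^ rP - x ^ d) ^ 2)) / 4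
        = x ^ (e * rP + d) := by
      rw [pow_add, pow_mul]; ring
    obtain ⟨u', v', hfold, hval⟩ := ih _ _ (e * rP + d) h'
    refine ⟨u', v', ?_, hval⟩
    simp only [blocks, List.foldl_append, hb, hfold, List.foldl_cons]

lemma horner_rev (b : ℕ) : ∀ (l : List ℕ) (a : ℕ),
    l.reverse.foldl (fun e d => e * b + d) a = a * b ^ l.length + Nat.ofDigits b l := by
  intro l
  induction l with
  | nil => intro a; simp [Nat.ofDigits]
  | cons d t ih =>
    intro a
    simp only [List.reverse_cons, List.foldl_append, List.foldl_cons, List.foldl_nil, ih,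
      Nat.ofDigits_cons, List.length_cons]
    ring

/-- For `n ≥ 1`, `r_P ≥ 2`, `r_Q ≥ 0` there is a rational neural network with activation
functions of type at most `(r_P, r_Q)` on `ℝ`, of size at most `5⌊log_{r_P} n⌋² + 1`,
representing `x ↦ xⁿ` exactly on `ℝ`. -/
theorem monomial_exact_rational_network (n rP rQ : ℕ) (hn : 1 ≤ n) (hrP : 2 ≤ rP) :
    ∃ R : NeuralNet 1,
      (∀ layer ∈ R.layers, ∀ ne ∈ layer, IsRationalOn ne.σ rP rQ Set.univ) ∧
      R.size ≤ 5 * (Nat.log rP n) ^ 2 + 1 ∧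
      ∀ x : ℝ, R.eval (fun _ => x) = x ^ n := by
  have hrP1 : 1 < rP := hrP
  have hn0 : n ≠ 0 := by omega
  set L := Nat.log rP n with hLdef
  rcases Nat.lt_or_ge L 2 with hL2 | hL2
  · interval_cases L
    · -- L = 0 : n < rP
      have hnrP : n < rP := by
        have := Nat.lt_pow_succ_log_self hrP1 n
        rw [← hLdef] at this
        simpa using this
      refine ⟨⟨[[pN 1 n [1]]], [1], 0⟩, ?_, ?_, ?_⟩
      · intro layer hl ne hne
        simp only [List.mem_singleton] at hl
        subst hl
        simp only [List.mem_singleton] at hne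
        subst hne
        exact pN_rat 1 n rP rQ hnrP.le
      · simp [NeuralNet.size]
      · intro x
        have hofn : (List.ofFn fun _ : Fin 1 => x) = [x] := by
          simp [List.ofFn_succ]
        simp only [NeuralNet.eval, hofn, List.foldl_cons, List.foldl_nil, List.map_cons,
          List.map_nil, Neuron.eval, pN, listDot, List.zip_cons_cons, List.zip_nil_left,
          List.zip_nil_right, List.sum_cons, List.sum_nil, one_mul, pow_one]
        ring
    · -- L = 1 : rP ≤ n < rP ^ 2
      have hnlt : n < rP ^ 2 := by
        have := Nat.lt_pow_succ_log_self hrP1 n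
        rw [← hLdef] at this
        simpa using this
      have hd1 : n / rP < rP := Nat.div_lt_of_lt_mul (by rw [← sq]; exact hnlt)
      have hd0 : n % rP < rP := Nat.mod_lt _ (by omega)
      refine ⟨⟨[[pN 1 (n / rP) [1], pN 1 1 [1]],
                [pN 1 rP [1, 0], pN 1 (n % rP) [0, 1]],
                [pN 1 2 [1, 1], pN 1 2 [1, -1]]], [4⁻¹, -4⁻¹], 0⟩, ?_, ?_, ?_⟩
      · intro layer hl ne hne
        simp only [List.mem_cons, List.not_mem_nil, or_false] at hl
        rcases hl with rfl | rfl | rfl <;>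
          (simp only [List.mem_cons, List.not_mem_nil, or_false] at hne ;
           rcases hne with rfl | rfl) <;>
          apply pN_rat <;> omega
      · simp [NeuralNet.size]
      · intro x
        have hofn : (List.ofFn fun _ : Fin 1 => x) = [x] := by
          simp [List.ofFn_succ]
        have hmod : n / rP * rP + n % rP = n := Nat.div_add_mod' n rP
        have key : ((x ^ (n / rP)) ^ rP) * x ^ (n % rP) = x ^ n := by
          rw [← pow_mul, ← pow_add, hmod]
        simp only [NeuralNet.eval, hofn, Neuron.eval, listDot, pN,
          List.foldl_cons, List.foldl_nil, List.map_cons, List.map_nil,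
          List.zip_cons_cons, List.zip_nil_left, List.zip_nil_right,
          List.sum_cons, List.sum_nil, one_mul, pow_one]
        rw [← key]
        ring
  · -- L ≥ 2 : general construction
    have hlen : (Nat.digits rP n).length = L + 1 := Nat.digits_len rP n hrP1 hn0
    rcases hrev : (Nat.digits rP n).reverse with _ | ⟨dL, rest⟩
    · exfalso
      have : (Nat.digits rP n).reverse.length = 0 := by rw [hrev]; rfl
      simp [hlen] at this
    have hrestlen : rest.length = L := by
      have : (Nat.digits rP n).reverse.length = L + 1 := by simpa using hlen
      rw [hrev] at this
      simpa using this
    have hmemlt : ∀ d ∈ dL :: rest, d < rP := by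
      intro d hd
      rw [← hrev, List.mem_reverse] at hd
      exact Nat.digits_lt_base hrP1 hd
    refine ⟨⟨[pN 4 dL [1], pN 0 0 [1], pN 1 1 [1]] :: blocks rP rest,
              [4⁻¹, -4⁻¹, 0], 0⟩, ?_, ?_, ?_⟩
    · intro layer hl ne hne
      rcases List.mem_cons.1 hl with rfl | hl
      · simp only [List.mem_cons, List.not_mem_nil, or_false] at hne
        rcases hne with rfl | rfl | rfl <;> apply pN_rat <;>
          first
            | exact (hmemlt dL (by simp)).le
            | omega
      · obtain ⟨c, k, hk, hσ⟩ := blocks_mem rP rest hl hne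
        rw [hσ]
        apply pN_rat
        rcases hk with hk | hk | hk
        · exact hk
        · omega
        · exact (hmemlt k (by simp [hk])).le
    · have : NeuralNet.size (d := 1) ⟨[pN 4 dL [1], pN 0 0 [1], pN 1 1 [1]] :: blocks rP rest,
          [4⁻¹, -4⁻¹, 0], 0⟩ = 3 + 6 * rest.length := by
        simp [NeuralNet.size, blocks_size]
      rw [this, hrestlen]
      nlinarith
    · intro x
      have hofn : (List.ofFn fun _ : Fin 1 => x) = [x] := by
        simp [List.ofFn_succ]
      have hfirst : ([pN 4 dL [1], pN 0 0 [1], pN 1 1 [1]].map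
          (fun ne => ne.eval [x])) = [4 * x ^ dL, 0, x] := by
        simp [pN, Neuron.eval, listDot]
      have hstart : ((4 : ℝ) * x ^ dL - 0) / 4 = x ^ dL := by ring
      obtain ⟨u', v', hfold, hval⟩ := blocks_eval rP rest x (4 * x ^ dL) 0 dL hstart
      have hE : rest.foldl (fun a d => a * rP + d) dL = n := by
        have h1 : (dL :: rest).foldl (fun a d => a * rP + d) 0 = n := by
          rw [← hrev, horner_rev]
          simpa using Nat.ofDigits_digits rP n
        simpa using h1
      simp only [NeuralNet.eval, hofn, List.foldl_cons]
      rw [hfirst, hfold]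
      rw [hE] at hval
      simp only [listDot, List.zip_cons_cons, List.zip_nil_left, List.zip_nil_right,
        List.map_cons, List.map_nil, List.sum_cons, List.sum_nil]
      rw [← hval]
      ring
end

section
/- Let g : [0, 1] → ℝ be a continuous piecewise linear function with breakpoints 0 ≤ b_1 < ⋯ < b_m ≤ 1 and Lipschitz constant L > 0. Then there exist real coefficients c_0, c_1, …, c_m, c_{m+1} with |c_0| ≤ L and |c_j| ≤ 2L for 1 ≤ j ≤ m such that g(x) = c_0·ReLU(b_1 − x) + Σ_{j=1}^m c_j·ReLU(x − b_j) + c_{m+1} for all x ∈ [0, 1]. -/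
open Real Set

/-- `g` is affine on the set `s`. -/
def AffineOnSet (g : ℝ → ℝ) (s : Set ℝ) : Prop :=
  ∃ α β : ℝ, ∀ x ∈ s, g x = α * x + β

/-- A continuous piecewise linear function on `[0,1]` with breakpoints
`0 ≤ b_1 < ⋯ < b_m ≤ 1` and Lipschitz constant `L` can be written on `[0,1]` as
`g(x) = c_0·ReLU(b_1 - x) + Σ_j c_j·ReLU(x - b_j) + c_{m+1}` with `|c_0| ≤ L` and
`|c_j| ≤ 2L`. -/
theorem piecewise_linear_relu_representation (m : ℕ) (hm : 1 ≤ m) (b : Fin m → ℝ)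
    (g : ℝ → ℝ) (L : ℝ) (hL : 0 < L)
    (hb : ∀ i, b i ∈ Set.Icc (0 : ℝ) 1) (hmono : StrictMono b)
    (hcont : ContinuousOn g (Set.Icc 0 1))
    (hLip : ∀ x ∈ Set.Icc (0 : ℝ) 1, ∀ y ∈ Set.Icc (0 : ℝ) 1, |g x - g y| ≤ L * |x - y|)
    (hfirst : AffineOnSet g (Set.Icc 0 (b ⟨0, hm⟩)))
    (hmid : ∀ i : ℕ, ∀ h : i + 1 < m,
      AffineOnSet g (Set.Icc (b ⟨i, by omega⟩) (b ⟨i + 1, h⟩)))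
    (hlast : AffineOnSet g (Set.Icc (b ⟨m - 1, by omega⟩) 1)) :
    ∃ (c₀ clast : ℝ) (c : Fin m → ℝ),
      |c₀| ≤ L ∧ (∀ j, |c j| ≤ 2 * L) ∧
      ∀ x ∈ Set.Icc (0 : ℝ) 1,
        g x = c₀ * ReLU (b ⟨0, hm⟩ - x) + (∑ j, c j * ReLU (x - b j)) + clast := by
  have hReLU_pos : ∀ x : ℝ, 0 ≤ x → ReLU x = x := fun x hx => max_eq_left hx
  have hReLU_neg : ∀ x : ℝ, x ≤ 0 → ReLU x = 0 := fun x hx => max_eq_right hx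
  -- extended breakpoints
  set bb : ℕ → ℝ := fun i => if h : i < m then b ⟨i, h⟩ else 1 with hbbdef
  have hbb_lt : ∀ i (h : i < m), bb i = b ⟨i, h⟩ := by
    intro i h; simp [hbbdef, h]
  have hbb_ge : ∀ i, m ≤ i → bb i = 1 := by
    intro i h; simp [hbbdef, Nat.not_lt.mpr h]
  have hbb_mem : ∀ i, bb i ∈ Icc (0:ℝ) 1 := by
    intro i; by_cases h : i < m
    · rw [hbb_lt i h]; exact hb _
    · rw [hbb_ge i (le_of_not_gt h)]; exact ⟨zero_le_one, le_refl 1⟩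
  have hbb_mono : ∀ i j, i ≤ j → bb i ≤ bb j := by
    intro i j hij
    by_cases hj : j < m
    · have hi : i < m := lt_of_le_of_lt hij hj
      rw [hbb_lt i hi, hbb_lt j hj]
      exact hmono.monotone (Fin.mk_le_mk.mpr hij)
    · rw [hbb_ge j (le_of_not_gt hj)]; exact (hbb_mem i).2
  -- left endpoints of pieces
  set sp : ℕ → ℝ := fun k => match k with | 0 => 0 | (k+1) => bb k with hspdef
  have hsp0 : sp 0 = 0 := rfl
  have hsps : ∀ k, sp (k+1) = bb k := fun k => rfl
  have hsp_mem : ∀ k, sp k ∈ Icc (0:ℝ) 1 := by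
    intro k; cases k with
    | zero => exact ⟨le_refl 0, zero_le_one⟩
    | succ n => exact hbb_mem n
  have hsp_le : ∀ k, sp k ≤ bb k := by
    intro k; cases k with
    | zero => exact (hbb_mem 0).1
    | succ n => exact hbb_mono n (n+1) (Nat.le_succ n)
  -- slopes
  set al : ℕ → ℝ := fun k =>
    if bb k = sp k then 0 else (g (bb k) - g (sp k)) / (bb k - sp k) with haldef
  -- g is affine with slope al k on piece k
  have Hpiece : ∀ k, k ≤ m → ∀ x ∈ Icc (sp k) (bb k),
      g x = g (sp k) + al k * (x - sp k) := by
    intro k hk x hx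
    have haff : AffineOnSet g (Icc (sp k) (bb k)) := by
      match k, hk with
      | 0, _ =>
        have : bb 0 = b ⟨0, hm⟩ := hbb_lt 0 hm
        rw [hsp0, this]; exact hfirst
      | (n+1), hk =>
        by_cases hnm : n + 1 < m
        · have h1 : bb n = b ⟨n, by omega⟩ := hbb_lt n (by omega)
          have h2 : bb (n+1) = b ⟨n+1, hnm⟩ := hbb_lt (n+1) hnm
          rw [hsps, h1, h2]; exact hmid n hnm
        · have hnm' : n + 1 = m := by omega
          have h1 : bb n = b ⟨m - 1, by omega⟩ := by
            rw [hbb_lt n (by omega)]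
            congr 1
            simp only [Fin.mk.injEq]
            omega
          have h2 : bb (n+1) = 1 := hbb_ge (n+1) (by omega)
          rw [hsps, h1, h2]; exact hlast
    obtain ⟨a, β, hab⟩ := haff
    by_cases hdeg : bb k = sp k
    · have hxeq : x = sp k := le_antisymm (hdeg ▸ hx.2) hx.1
      rw [hxeq]; ring
    · have halk : al k = (g (bb k) - g (sp k)) / (bb k - sp k) := by
        rw [haldef]; simp [hdeg]
      have hlt : sp k < bb k := lt_of_le_of_ne (hsp_le k) (Ne.symm hdeg)
      have he1 : g (sp k) = a * sp k + β := hab _ ⟨le_refl _, le_of_lt hlt⟩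
      have he2 : g (bb k) = a * bb k + β := hab _ ⟨le_of_lt hlt, le_refl _⟩
      have hax : g x = a * x + β := hab x hx
      have hane : bb k - sp k ≠ 0 := sub_ne_zero.mpr hdeg
      have ha : al k = a := by
        rw [halk, he1, he2]
        field_simp
        ring
      rw [ha, hax, he1]; ring
  -- slope bounds
  have Halpha : ∀ k, |al k| ≤ L := by
    intro k
    by_cases hdeg : bb k = sp k
    · rw [haldef]; simp [hdeg]; exact le_of_lt hL
    · have halk : al k = (g (bb k) - g (sp k)) / (bb k - sp k) := by
        rw [haldef]; simp [hdeg]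
      have hane : |bb k - sp k| > 0 := abs_pos.mpr (sub_ne_zero.mpr hdeg)
      rw [halk, abs_div, div_le_iff₀ hane]
      exact hLip _ (hbb_mem k) _ (hsp_mem k)
  -- coefficients
  set cc : ℕ → ℝ := fun j => if j = 0 then al 1 else al (j+1) - al j with hccdef
  have Hsum : ∀ k, ∑ j ∈ Finset.range (k+1), cc j = al (k+1) := by
    intro k
    induction k with
    | zero => simp [hccdef]
    | succ n ih =>
      rw [Finset.sum_range_succ, ih]
      have : cc (n+1) = al (n+2) - al (n+1) := by simp [hccdef]
      rw [this]; ring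
  -- main identity by induction on pieces
  have hmain : ∀ k, k ≤ m → ∀ x, 0 ≤ x → x ≤ bb k →
      g x = -al 0 * ReLU (bb 0 - x) +
        (∑ j ∈ Finset.range m, cc j * ReLU (x - bb j)) + g (bb 0) := by
    intro k
    induction k with
    | zero =>
      intro _ x hx0 hxk
      have hgx := Hpiece 0 (Nat.zero_le m) x ⟨by rw [hsp0]; exact hx0, hxk⟩
      have hgb := Hpiece 0 (Nat.zero_le m) (bb 0) ⟨hsp_le 0, le_refl _⟩
      rw [hsp0] at hgx hgb
      have hr1 : ReLU (bb 0 - x) = bb 0 - x := hReLU_pos _ (by linarith)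
      have hr2 : ∑ j ∈ Finset.range m, cc j * ReLU (x - bb j) = 0 := by
        apply Finset.sum_eq_zero
        intro j _
        have : x - bb j ≤ 0 := by
          have := hbb_mono 0 j (Nat.zero_le j); linarith
        rw [hReLU_neg _ this, mul_zero]
      rw [hr1, hr2, hgx, hgb]; ring
    | succ k ih =>
      intro hk x hx0 hxk
      by_cases hxb : x ≤ bb k
      · exact ih (by omega) x hx0 hxb
      · push_neg at hxb
        have hbkx : bb k ≤ x := le_of_lt hxb
        have hgx := Hpiece (k+1) hk x ⟨by rw [hsps]; exact hbkx, hxk⟩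
        rw [hsps] at hgx
        have hIH := ih (by omega) (bb k) (hbb_mem k).1 (le_refl _)
        -- split the sums
        have hsplit : ∀ y, bb k ≤ y → y ≤ bb (k+1) →
            ∑ j ∈ Finset.range m, cc j * ReLU (y - bb j) =
            ∑ j ∈ Finset.range (k+1), cc j * (y - bb j) := by
          intro y hy1 hy2
          rw [← Finset.sum_range_add_sum_Ico _ (show k+1 ≤ m by omega)]
          have hz : ∑ j ∈ Finset.Ico (k+1) m, cc j * ReLU (y - bb j) = 0 := by
            apply Finset.sum_eq_zero
            intro j hj
            have hj1 : k + 1 ≤ j := (Finset.mem_Ico.mp hj).1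
            have : y - bb j ≤ 0 := by
              have := hbb_mono (k+1) j hj1; linarith
            rw [hReLU_neg _ this, mul_zero]
          rw [hz, add_zero]
          apply Finset.sum_congr rfl
          intro j hj
          have hj1 : j ≤ k := by
            have := Finset.mem_range.mp hj; omega
          have : 0 ≤ y - bb j := by
            have := hbb_mono j k hj1; linarith
          rw [hReLU_pos _ this]
        have hsx := hsplit x hbkx hxk
        have hsb := hsplit (bb k) (le_refl _) (hbb_mono k (k+1) (Nat.le_succ k))
        have hr0x : ReLU (bb 0 - x) = 0 := by
          apply hReLU_neg
          have := hbb_mono 0 k (Nat.zero_le k); linarith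
        have hr0b : ReLU (bb 0 - bb k) = 0 := by
          apply hReLU_neg
          have := hbb_mono 0 k (Nat.zero_le k); linarith
        rw [hsx, hr0x]
        rw [hsb, hr0b] at hIH
        have hdecomp : ∑ j ∈ Finset.range (k+1), cc j * (x - bb j) =
            (∑ j ∈ Finset.range (k+1), cc j * (bb k - bb j)) +
            (∑ j ∈ Finset.range (k+1), cc j) * (x - bb k) := by
          rw [Finset.sum_mul, ← Finset.sum_add_distrib]
          apply Finset.sum_congr rfl
          intro j _; ring
        rw [hdecomp, Hsum k]
        rw [hgx, hIH]
        ring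
  -- instantiate
  refine ⟨-al 0, g (bb 0), fun j => cc j.val, ?_, ?_, ?_⟩
  · rw [abs_neg]; exact Halpha 0
  · intro j
    show |cc j.val| ≤ 2 * L
    by_cases hj : j.val = 0
    · have h0 : cc j.val = al 1 := by simp [hccdef, hj]
      rw [h0]
      have := Halpha 1; linarith
    · have h0 : cc j.val = al (j.val + 1) - al j.val := by simp [hccdef, hj]
      rw [h0]
      calc |al (j.val+1) - al j.val| ≤ |al (j.val+1)| + |al j.val| := abs_sub _ _
        _ ≤ L + L := add_le_add (Halpha _) (Halpha _)
        _ = 2 * L := by ring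
  · intro x hx
    have hb0 : b ⟨0, hm⟩ = bb 0 := (hbb_lt 0 hm).symm
    have hxm : x ≤ bb m := by rw [hbb_ge m (le_refl m)]; exact hx.2
    have := hmain m (le_refl m) x hx.1 hxm
    rw [hb0]
    rw [this]
    congr 1
    congr 1
    rw [← Fin.sum_univ_eq_sum_range (fun j => cc j * ReLU (x - bb j)) m]
    apply Finset.sum_congr rfl
    intro j _
    rw [hbb_lt j.val j.isLt]
end

section
/- Let d ≥ 1, n ≥ 1, and N ≥ 1 be integers, and let f : [0, 1]^d → ℝ be n times continuously differentiable with |D^α f(x)| ≤ 1 for all x ∈ [0, 1]^d and all multi-indices α with |α| ≤ n. Define the local Taylor approximation f_N(x) = Σ_{m ∈ {0,…,N}^d} φ_m(x)·P_m(x), where P_m is the degree n−1 Taylor polynomial of f at x = m/N and φ_m(x) = ∏_{k=1}^d ψ_{m_k}(x_k) is the tensor-product partition-of-unity function with ψ_{m_k}(x) = 1 if |x − m_k/N| < 1/(3N), ψ_{m_k}(x) = 0 if |x − m_k/N| > 2/(3N), and ψ_{m_k}(x) = 2 − 3N·|x − m_k/N| otherwise. Then max_{x ∈ [0,1]^d}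 |f(x) − f_N(x)| ≤ (2^d · d^n / n!) · N^{−n}. -/
open Real Set

/-- The unit cube `[0,1]^d`. -/
def unitCube (d : ℕ) : Set (Fin d → ℝ) := {x | ∀ i, x i ∈ Set.Icc (0 : ℝ) 1}

/-- Iterated partial derivative (within a set `s`) along a list of coordinate
directions. -/
noncomputable def iterPartialWithin (d : ℕ) (s : Set (Fin d → ℝ)) :
    List (Fin d) → ((Fin d → ℝ) → ℝ) → ((Fin d → ℝ) → ℝ)
  | [], f => f
  | i :: l, f => iterPartialWithin d s l (fun x => fderivWithin ℝ f s x (Pi.single i 1))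

/-- The list of coordinate directions associated to a multi-index `α`: coordinate `k`
repeated `α k` times. -/
def multiIndexList (d : ℕ) (α : Fin d → ℕ) : List (Fin d) :=
  (List.ofFn fun k : Fin d => List.replicate (α k) k).flatten

/-- The multi-index partial derivative `D^α f` within a set. -/
noncomputable def multiPartialWithin (d : ℕ) (s : Set (Fin d → ℝ)) (α : Fin d → ℕ)
    (f : (Fin d → ℝ) → ℝ) : (Fin d → ℝ) → ℝ :=
  iterPartialWithin d s (multiIndexList d α) f

/-- The multi-indices `α` with `|α| < n`. -/
def multiIndicesLT (d n : ℕ) : Finset (Fin d → ℕ) :=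
  (Fintype.piFinset fun _ : Fin d => Finset.range n).filter fun α => (∑ k, α k) < n

/-- The piecewise linear partition-of-unity bump `ψ_{m_k}`. -/
noncomputable def psiBump (N mk : ℕ) (x : ℝ) : ℝ :=
  if |x - (mk : ℝ) / N| < 1 / (3 * N) then 1
  else if 2 / (3 * N) < |x - (mk : ℝ) / N| then 0
  else 2 - 3 * N * |x - (mk : ℝ) / N|

/-- The tensor-product partition-of-unity function `φ_m`. -/
noncomputable def phiBump (d N : ℕ) (m : Fin d → ℕ) (x : Fin d → ℝ) : ℝ :=
  ∏ k, psiBump N (m k) (x k)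

/-- The degree `n - 1` Taylor polynomial of `f` at `m/N` (derivatives within `[0,1]^d`). -/
noncomputable def taylorPoly (d n N : ℕ) (f : (Fin d → ℝ) → ℝ) (m : Fin d → ℕ)
    (x : Fin d → ℝ) : ℝ :=
  ∑ α ∈ multiIndicesLT d n,
    multiPartialWithin d (unitCube d) α f (fun k => (m k : ℝ) / N) /
        (∏ k, (Nat.factorial (α k) : ℝ)) *
      ∏ k, (x k - (m k : ℝ) / N) ^ α k

/-- The local Taylor approximation `f_N`. -/
noncomputable def localTaylor (d n N : ℕ) (f : (Fin d → ℝ) → ℝ) (x : Fin d → ℝ) : ℝ :=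
  ∑ m ∈ Fintype.piFinset fun _ : Fin d => Finset.range (N + 1),
    phiBump d N m x * taylorPoly d n N f m x

/-!
Since the `φ_m` form a partition of unity, `f - f_N = ∑_m φ_m (f - P_m)`, so it suffices to bound
`|f x - P_m x|` where `φ_m x ≠ 0`, i.e. where every `|x_k - m_k / N| ≤ 2 / (3N)`. For this we use
`|f x - P_a x| ≤ (∑_k |x_k - a_k|)^n / n!`, proved by induction on `n`: along the segment from `a`
to `x`, the derivative of the remainder of `f` is `∑_k (x_k - a_k)` times the remainder of `∂_k f`,
to which the induction hypothesis applies.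
-/

noncomputable def bumpProfile (u : ℝ) : ℝ :=
  if |u| < 1 / 3 then 1 else if 2 / 3 < |u| then 0 else 2 - 3 * |u|

lemma bumpProfile_nonneg (u : ℝ) : 0 ≤ bumpProfile u := by
  unfold bumpProfile
  split_ifs <;> linarith

lemma bumpProfile_eq_zero_of_lt_abs {u : ℝ} (h : 2 / 3 < |u|) : bumpProfile u = 0 := by
  rw [bumpProfile, if_neg (by linarith), if_pos h]

lemma bumpProfile_add_bumpProfile_sub_one {s : ℝ} (hs : s ∈ Icc (0 : ℝ) 1) :
    bumpProfile s + bumpProfile (s - 1) = 1 := by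
  rw [bumpProfile, bumpProfile, abs_of_nonneg hs.1, abs_of_nonpos (by linarith [hs.2])]
  split_ifs <;> linarith

lemma sum_range_bumpProfile {N : ℕ} (hN : 1 ≤ N) {u : ℝ} (hu : u ∈ Icc (0 : ℝ) N) :
    ∑ m ∈ Finset.range (N + 1), bumpProfile (u - m) = 1 := by
  obtain ⟨c, hcN, hcu, huc⟩ : ∃ c : ℕ, c + 1 ≤ N ∧ (c : ℝ) ≤ u ∧ u ≤ c + 1 := by
    rcases lt_or_eq_of_le hu.2 with hlt | rfl
    · refine ⟨⌊u⌋₊, ?_, Nat.floor_le hu.1, (Nat.lt_floor_add_one u).le⟩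
      exact Nat.floor_lt hu.1 |>.mpr hlt
    · have hcast : ((N - 1 : ℕ) : ℝ) = N - 1 := Nat.cast_pred hN
      exact ⟨N - 1, by omega, by rw [hcast]; linarith, by rw [hcast]; linarith⟩
  rw [Finset.sum_eq_add_of_mem c (c + 1) (Finset.mem_range.mpr (by omega))
    (Finset.mem_range.mpr (by omega)) (by omega)]
  · push_cast
    rw [← sub_sub]
    exact bumpProfile_add_bumpProfile_sub_one ⟨by linarith, by linarith⟩
  · rintro m - ⟨hmc, hmc'⟩
    apply bumpProfile_eq_zero_of_lt_abs
    rcases lt_or_gt_of_ne hmc with h | h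
    · have : (m : ℝ) + 1 ≤ c := by exact_mod_cast h
      rw [abs_of_nonneg (by linarith)]; linarith
    · have : (c : ℝ) + 2 ≤ m := by exact_mod_cast (show c + 2 ≤ m by omega)
      rw [abs_of_nonpos (by linarith)]; linarith

lemma psiBump_eq_bumpProfile {N : ℕ} (hN : 0 < N) (m : ℕ) (x : ℝ) :
    psiBump N m x = bumpProfile (N * x - m) := by
  have hN' : (0 : ℝ) < N := by exact_mod_cast hN
  have habs : |x - m / N| = |N * x - m| / N := by
    rw [← abs_of_pos hN', ← abs_div, abs_of_pos hN']
    congr 1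
    field_simp
  have hlt : ∀ c : ℝ, |N * x - m| / N < c / (3 * N) ↔ |N * x - m| < c / 3 := fun c => by
    rw [div_lt_div_iff₀ hN' (by positivity), lt_div_iff₀ (by norm_num : (0 : ℝ) < 3)]
    constructor <;> intro h <;> nlinarith
  have hgt : ∀ c : ℝ, c / (3 * N) < |N * x - m| / N ↔ c / 3 < |N * x - m| := fun c => by
    rw [div_lt_div_iff₀ (by positivity) hN', div_lt_iff₀ (by norm_num : (0 : ℝ) < 3)]
    constructor <;> intro h <;> nlinarith
  have hmul : 3 * N * (|N * x - m| / N) = 3 * |N * x - m| := by field_simp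
  simp only [psiBump, bumpProfile, habs, hlt, hgt, hmul]

lemma abs_sub_le_of_psiBump_ne_zero {N m : ℕ} {x : ℝ} (h : psiBump N m x ≠ 0) :
    |x - m / N| ≤ 2 / (3 * N) := by
  contrapose! h
  rw [psiBump, if_neg, if_pos h]
  refine not_lt.mpr (le_trans ?_ h.le)
  gcongr
  norm_num

lemma psiBump_nonneg {N : ℕ} (hN : 0 < N) (m : ℕ) (x : ℝ) : 0 ≤ psiBump N m x := by
  rw [psiBump_eq_bumpProfile hN]
  exact bumpProfile_nonneg _

lemma sum_range_psiBump {N : ℕ} (hN : 1 ≤ N) {x : ℝ} (hx : x ∈ Icc (0 : ℝ) 1) :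
    ∑ m ∈ Finset.range (N + 1), psiBump N m x = 1 := by
  simp_rw [psiBump_eq_bumpProfile hN]
  refine sum_range_bumpProfile hN ⟨by nlinarith [hx.1], ?_⟩
  nlinarith [hx.2, (Nat.cast_nonneg N : (0 : ℝ) ≤ N)]

lemma phiBump_nonneg {d N : ℕ} (hN : 0 < N) (m : Fin d → ℕ) (x : Fin d → ℝ) :
    0 ≤ phiBump d N m x :=
  Finset.prod_nonneg fun k _ => psiBump_nonneg hN (m k) (x k)

lemma sum_phiBump {d N : ℕ} (hN : 1 ≤ N) {x : Fin d → ℝ} (hx : x ∈ unitCube d) :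
    ∑ m ∈ Fintype.piFinset (fun _ : Fin d => Finset.range (N + 1)), phiBump d N m x = 1 := by
  simp only [phiBump]
  rw [← Finset.prod_univ_sum (fun _ => Finset.range (N + 1)) fun k m => psiBump N m (x k)]
  exact Finset.prod_eq_one fun k _ => sum_range_psiBump hN (hx k)

lemma abs_sub_le_of_phiBump_ne_zero {d N : ℕ} {m : Fin d → ℕ} {x : Fin d → ℝ}
    (h : phiBump d N m x ≠ 0) (k : Fin d) : |x k - m k / N| ≤ 2 / (3 * N) :=
  abs_sub_le_of_psiBump_ne_zero fun hk => h (Finset.prod_eq_zero (Finset.mem_univ k) hk)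

section
variable {d : ℕ} {s : Set (Fin d → ℝ)}

noncomputable def partialWithin (s : Set (Fin d → ℝ)) (i : Fin d) (f : (Fin d → ℝ) → ℝ) :
    (Fin d → ℝ) → ℝ :=
  fun x => fderivWithin ℝ f s x (Pi.single i 1)

lemma iterPartialWithin_cons (i : Fin d) (l : List (Fin d)) (f : (Fin d → ℝ) → ℝ) :
    iterPartialWithin d s (i :: l) f = iterPartialWithin d s l (partialWithin s i f) := rfl

lemma contDiffOn_partialWithin {m : WithTop ℕ∞} {f : (Fin d → ℝ) → ℝ} (hs : UniqueDiffOn ℝ s)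
    (hf : ContDiffOn ℝ (m + 1) f s) (i : Fin d) : ContDiffOn ℝ m (partialWithin s i f) s :=
  (hf.fderivWithin hs le_rfl).clm_apply contDiffOn_const

lemma fderivWithin_apply_eq_sum (f : (Fin d → ℝ) → ℝ) (y v : Fin d → ℝ) :
    fderivWithin ℝ f s y v = ∑ k, v k * partialWithin s k f y := by
  conv_lhs => rw [pi_eq_sum_univ' v, map_sum]
  simp [partialWithin]

lemma iterPartialWithin_congr (l : List (Fin d)) {f g : (Fin d → ℝ) → ℝ} (h : EqOn f g s) :
    EqOn (iterPartialWithin d s l f) (iterPartialWithin d s l g) s := by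
  induction l generalizing f g with
  | nil => exact h
  | cons i l ih =>
    refine ih fun y hy => ?_
    simp only [fderivWithin_congr h (h hy)]

lemma partialWithin_comm (hs : UniqueDiffOn ℝ s) (hsi : s ⊆ closure (interior s))
    {f : (Fin d → ℝ) → ℝ} (hf : ContDiffOn ℝ 2 f s) (i j : Fin d) :
    EqOn (partialWithin s i (partialWithin s j f)) (partialWithin s j (partialWithin s i f)) s := by
  intro y hy
  have hdiff : DifferentiableWithinAt ℝ (fderivWithin ℝ f s) s y :=
    ((hf.fderivWithin hs (by norm_num : (1 : WithTop ℕ∞) + 1 ≤ 2)) y hy).differentiableWithinAt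
      one_ne_zero
  have hsymm : IsSymmSndFDerivWithinAt ℝ f s y :=
    (hf y hy).isSymmSndFDerivWithinAt (by simp) hs (hsi hy) hy
  have hsnd : ∀ a b : Fin d, partialWithin s a (partialWithin s b f) y =
      fderivWithin ℝ (fderivWithin ℝ f s) s y (Pi.single a 1) (Pi.single b 1) := fun a b => by
    unfold partialWithin
    rw [fderivWithin_clm_apply (hs y hy) hdiff (differentiableWithinAt_const _),
      fderivWithin_const_apply]
    simp
  rw [hsnd, hsnd, hsymm.eq]

lemma iterPartialWithin_perm (hs : UniqueDiffOn ℝ s) (hsi : s ⊆ closure (interior s))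
    {l₁ l₂ : List (Fin d)} (hp : l₁.Perm l₂) {f : (Fin d → ℝ) → ℝ}
    (hf : ContDiffOn ℝ l₁.length f s) :
    EqOn (iterPartialWithin d s l₁ f) (iterPartialWithin d s l₂ f) s := by
  induction hp generalizing f with
  | nil => exact fun _ _ => rfl
  | cons i _ ih =>
    rw [iterPartialWithin_cons, iterPartialWithin_cons]
    refine ih (contDiffOn_partialWithin hs (hf.of_le ?_) i)
    simp
  | swap i j l =>
    simp only [iterPartialWithin_cons]
    refine iterPartialWithin_congr l (partialWithin_comm hs hsi (hf.of_le ?_) i j)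
    simp only [List.length_cons]; exact_mod_cast (by omega)
  | trans p _ ih₁ ih₂ => exact (ih₁ hf).trans (ih₂ (p.length_eq ▸ hf))

lemma sum_add_single {ι : Type*} [Fintype ι] [DecidableEq ι] (β : ι → ℕ) (k : ι) :
    ∑ j, (β + Pi.single k 1 : ι → ℕ) j = ∑ j, β j + 1 := by
  simp [Finset.sum_add_distrib]

lemma mem_multiIndicesLT {n : ℕ} {α : Fin d → ℕ} : α ∈ multiIndicesLT d n ↔ ∑ k, α k < n := by
  rw [multiIndicesLT, Finset.mem_filter, Fintype.mem_piFinset, and_iff_right_iff_imp]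
  exact fun h k => Finset.mem_range.mpr <|
    (Finset.single_le_sum (fun j _ => Nat.zero_le (α j)) (Finset.mem_univ k)).trans_lt h

lemma count_multiIndexList (α : Fin d → ℕ) (k : Fin d) : (multiIndexList d α).count k = α k := by
  simp [multiIndexList, List.count_flatten, List.sum_ofFn, List.count_replicate]

lemma length_multiIndexList (α : Fin d → ℕ) : (multiIndexList d α).length = ∑ k, α k := by
  simp [multiIndexList, List.sum_ofFn]

lemma multiPartialWithin_zero (f : (Fin d → ℝ) → ℝ) : multiPartialWithin d s 0 f = f := by
  have h : multiIndexList d 0 = [] :=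
    List.eq_nil_of_length_eq_zero (by simp [length_multiIndexList])
  rw [multiPartialWithin, h]
  rfl

lemma multiPartialWithin_add_single (hs : UniqueDiffOn ℝ s) (hsi : s ⊆ closure (interior s))
    (β : Fin d → ℕ) (k : Fin d) {f : (Fin d → ℝ) → ℝ}
    (hf : ContDiffOn ℝ (∑ j, β j + 1 : ℕ) f s) :
    EqOn (multiPartialWithin d s (β + Pi.single k 1) f)
      (multiPartialWithin d s β (partialWithin s k f)) s := by
  have hperm : (multiIndexList d (β + Pi.single k 1)).Perm (k :: multiIndexList d β) := by
    rw [List.perm_iff_count]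
    intro j
    rw [count_multiIndexList, List.count_cons, count_multiIndexList]
    rcases eq_or_ne j k with rfl | h <;> simp [*, Ne.symm]
  exact iterPartialWithin_perm hs hsi hperm (by rwa [length_multiIndexList, sum_add_single])

noncomputable def taylorSum (n : ℕ) (c : (Fin d → ℕ) → ℝ) (y : Fin d → ℝ) : ℝ :=
  ∑ α ∈ multiIndicesLT d n, c α / (∏ k, ((α k).factorial : ℝ)) * ∏ k, y k ^ α k

lemma taylorSum_congr {n : ℕ} {c c' : (Fin d → ℕ) → ℝ}
    (h : ∀ α ∈ multiIndicesLT d n, c α = c' α) (y : Fin d → ℝ) :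
    taylorSum n c y = taylorSum n c' y :=
  Finset.sum_congr rfl fun α hα => by rw [h α hα]

lemma taylorSum_zero (c : (Fin d → ℕ) → ℝ) (y : Fin d → ℝ) : taylorSum 0 c y = 0 := by
  simp [taylorSum, mem_multiIndicesLT, Finset.sum_eq_zero]

lemma taylorSum_succ_zero (n : ℕ) (c : (Fin d → ℕ) → ℝ) : taylorSum (n + 1) c 0 = c 0 := by
  rw [taylorSum, Finset.sum_eq_single_of_mem 0 (mem_multiIndicesLT.mpr (by simp))]
  · simp
  · intro α _ hα
    obtain ⟨k, hk⟩ : ∃ k, α k ≠ 0 := by simpa [funext_iff] using hα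
    have h0 : ∏ j, (0 : Fin d → ℝ) j ^ α j = 0 :=
      Finset.prod_eq_zero (Finset.mem_univ k) (by simp [hk])
    rw [h0, mul_zero]

lemma taylorSum_smul (n : ℕ) (c : (Fin d → ℕ) → ℝ) (t : ℝ) (v : Fin d → ℝ) :
    taylorSum n c (t • v) =
      ∑ α ∈ multiIndicesLT d n,
        c α / (∏ k, ((α k).factorial : ℝ)) * (∏ k, v k ^ α k) * t ^ ∑ k, α k := by
  refine Finset.sum_congr rfl fun α _ => ?_
  simp only [Pi.smul_apply, smul_eq_mul, mul_pow, Finset.prod_mul_distrib,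
    Finset.prod_pow_eq_pow_sum]
  ring

lemma sum_mul_apply_eq_sum_add_single (n : ℕ) (k : Fin d) (F : (Fin d → ℕ) → ℝ) :
    ∑ α ∈ multiIndicesLT d (n + 1), (α k : ℝ) * F α =
      ∑ β ∈ multiIndicesLT d n, ((β k : ℝ) + 1) * F (β + Pi.single k 1) := by
  rw [← Finset.sum_filter_of_ne (p := fun α => α k ≠ 0) fun α _ h hk => by simp [hk] at h]
  symm
  refine Finset.sum_nbij' (· + Pi.single k 1) (· - Pi.single k 1) ?_ ?_ ?_ ?_ ?_
  · intro β hβ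
    simp only [Finset.mem_filter, mem_multiIndicesLT, sum_add_single] at hβ ⊢
    simp [hβ]
  · intro α hα
    simp only [Finset.mem_filter, mem_multiIndicesLT] at hα ⊢
    have hle : Pi.single k 1 ≤ α := fun j => by
      rcases eq_or_ne j k with rfl | h <;> simp [*, Nat.one_le_iff_ne_zero]
    have := sum_add_single (α - Pi.single k 1) k
    rw [tsub_add_cancel_of_le hle] at this
    omega
  · intro β _
    exact add_tsub_cancel_right β _
  · intro α hα
    simp only [Finset.mem_filter] at hα
    refine tsub_add_cancel_of_le fun j => ?_
    rcases eq_or_ne j k with rfl | h <;> simp [*, Nat.one_le_iff_ne_zero]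
  · intro β _
    simp

lemma prod_add_single {ι M : Type*} [Fintype ι] [DecidableEq ι] [CommMonoid M] (g : ι → ℕ → M)
    (β : ι → ℕ) (k : ι) :
    ∏ j, g j ((β + Pi.single k 1 : ι → ℕ) j) = g k (β k + 1) * ∏ j ∈ {k}ᶜ, g j (β j) := by
  rw [Fintype.prod_eq_mul_prod_compl k]
  congr 1
  · simp
  · refine Finset.prod_congr rfl fun j hj => ?_
    have hjk : j ≠ k := by simpa using hj
    simp [hjk]

lemma succ_mul_taylorCoeff_add_single (a : ℝ) (v : Fin d → ℝ) (β : Fin d → ℕ) (k : Fin d) :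
    ((β k : ℝ) + 1) * (a / (∏ j, (((β + Pi.single k 1 : Fin d → ℕ) j).factorial : ℝ)) *
      ∏ j, v j ^ (β + Pi.single k 1 : Fin d → ℕ) j) =
      v k * (a / (∏ j, ((β j).factorial : ℝ)) * ∏ j, v j ^ β j) := by
  rw [prod_add_single (fun _ m => (m.factorial : ℝ)), prod_add_single (fun j m => v j ^ m),
    Fintype.prod_eq_mul_prod_compl k (fun j => ((β j).factorial : ℝ)),
    Fintype.prod_eq_mul_prod_compl k (fun j => v j ^ β j), Nat.factorial_succ]
  have : ∏ j ∈ {k}ᶜ, ((β j).factorial : ℝ) ≠ 0 :=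
    Finset.prod_ne_zero_iff.mpr fun j _ => by positivity
  push_cast
  field_simp
  ring

/-- Along a ray, differentiating `y^α / α!` in direction `k` gives `y^(α - e_k) / (α - e_k)!`,
so the coefficients of the derivative are those of `c` shifted by `e_k`. -/
lemma hasDerivAt_taylorSum_smul (n : ℕ) (c : (Fin d → ℕ) → ℝ) (v : Fin d → ℝ) (t : ℝ) :
    HasDerivAt (fun t => taylorSum (n + 1) c (t • v))
      (∑ k, v k * taylorSum n (fun β => c (β + Pi.single k 1)) (t • v)) t := by
  simp_rw [taylorSum_smul]
  set C : (Fin d → ℕ) → ℝ := fun α => c α / (∏ j, ((α j).factorial : ℝ)) * ∏ j, v j ^ α j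
  refine (HasDerivAt.fun_sum (u := multiIndicesLT d (n + 1))
    fun α _ => (hasDerivAt_pow (∑ j, α j) t).const_mul (C α)).congr_deriv (Eq.symm ?_)
  calc ∑ k, v k * ∑ β ∈ multiIndicesLT d n,
        c (β + Pi.single k 1) / (∏ j, ((β j).factorial : ℝ)) * (∏ j, v j ^ β j) * t ^ ∑ j, β j
      = ∑ k, ∑ β ∈ multiIndicesLT d n, ((β k : ℝ) + 1) *
          (C (β + Pi.single k 1) * t ^ (∑ j, (β + Pi.single k 1 : Fin d → ℕ) j - 1)) := by
        refine Finset.sum_congr rfl fun k _ => ?_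
        rw [Finset.mul_sum]
        refine Finset.sum_congr rfl fun β _ => ?_
        rw [sum_add_single, Nat.add_sub_cancel, ← mul_assoc ((β k : ℝ) + 1), ← mul_assoc (v k)]
        simp only [C, succ_mul_taylorCoeff_add_single]
    _ = ∑ k, ∑ α ∈ multiIndicesLT d (n + 1), (α k : ℝ) * (C α * t ^ (∑ j, α j - 1)) := by
        simp_rw [sum_mul_apply_eq_sum_add_single]
    _ = ∑ α ∈ multiIndicesLT d (n + 1), C α * ((∑ j, α j : ℕ) * t ^ (∑ j, α j - 1)) := by
        rw [Finset.sum_comm]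
        refine Finset.sum_congr rfl fun α _ => ?_
        rw [← Finset.sum_mul, Nat.cast_sum]
        ring

lemma abs_le_of_abs_deriv_le_mul_pow {g g' : ℝ → ℝ} {K : ℝ} {n : ℕ}
    (hg : ∀ t ∈ Icc (0 : ℝ) 1, HasDerivWithinAt g (g' t) (Icc 0 1) t) (h0 : g 0 = 0)
    (hb : ∀ t ∈ Icc (0 : ℝ) 1, |g' t| ≤ K * t ^ n) : |g 1| ≤ K / (n + 1) := by
  have hB : ∀ t, HasDerivAt (fun t => K / (n + 1) * t ^ (n + 1)) (K * t ^ n) t := fun t => by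
    refine ((hasDerivAt_pow (n + 1) t).const_mul _).congr_deriv ?_
    field_simp
    push_cast
    ring
  simpa using image_norm_le_of_norm_deriv_right_le_deriv_boundary
    (fun t ht => (hg t ht).continuousWithinAt)
    (fun t ht => (hg t (Ico_subset_Icc_self ht)).mono_of_mem_nhdsWithin (Icc_mem_nhdsGE_of_mem ht))
    (by simp [h0]) hB (fun t ht => hb t (Ico_subset_Icc_self ht)) (right_mem_Icc.mpr zero_le_one)

lemma hasDerivWithinAt_taylorRemainder_segment (hs : UniqueDiffOn ℝ s)
    (hsi : s ⊆ closure (interior s)) (hconv : Convex ℝ s) {n : ℕ} {f : (Fin d → ℝ) → ℝ}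
    (hf : ContDiffOn ℝ (n + 1 : ℕ) f s) {a x : Fin d → ℝ} (ha : a ∈ s) (hx : x ∈ s)
    {t : ℝ} (ht : t ∈ Icc (0 : ℝ) 1) :
    HasDerivWithinAt
      (fun t => f (a + t • (x - a)) -
        taylorSum (n + 1) (fun α => multiPartialWithin d s α f a) (t • (x - a)))
      (∑ k, (x k - a k) * (partialWithin s k f (a + t • (x - a)) -
        taylorSum n (fun β => multiPartialWithin d s β (partialWithin s k f) a) (t • (x - a))))
      (Icc 0 1) t := by
  have hseg : MapsTo (fun t : ℝ => a + t • (x - a)) (Icc 0 1) s :=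
    fun t ht => hconv.add_smul_sub_mem ha hx ht
  have hline : HasDerivWithinAt (fun t : ℝ => a + t • (x - a)) (x - a) (Icc 0 1) t := by
    simpa using ((hasDerivAt_id t).smul_const (x - a)).const_add a |>.hasDerivWithinAt
  have hfline := ((hf.differentiableOn (by simp)) _ (hseg ht)).hasFDerivWithinAt
    |>.comp_hasDerivWithinAt t hline hseg
  rw [fderivWithin_apply_eq_sum] at hfline
  have hpoly := hasDerivAt_taylorSum_smul n (fun α => multiPartialWithin d s α f a) (x - a) t
  refine (hfline.sub hpoly.hasDerivWithinAt).congr_deriv ?_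
  rw [← Finset.sum_sub_distrib]
  refine Finset.sum_congr rfl fun k _ => ?_
  rw [mul_sub, taylorSum_congr fun β hβ => multiPartialWithin_add_single hs hsi β k
    (hf.of_le (by exact_mod_cast Nat.succ_le_succ (mem_multiIndicesLT.mp hβ).le)) ha]
  rfl

theorem abs_sub_taylorSum_le (hconv : Convex ℝ s) (hint : (interior s).Nonempty) {M : ℝ}
    (n : ℕ) {f : (Fin d → ℝ) → ℝ} (hf : ContDiffOn ℝ n f s)
    (hbound : ∀ α : Fin d → ℕ, ∑ k, α k ≤ n → ∀ y ∈ s, |multiPartialWithin d s α f y| ≤ M)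
    {a x : Fin d → ℝ} (ha : a ∈ s) (hx : x ∈ s) :
    |f x - taylorSum n (fun α => multiPartialWithin d s α f a) (x - a)| ≤
      M * (∑ k, |x k - a k|) ^ n / n.factorial := by
  have hs : UniqueDiffOn ℝ s := uniqueDiffOn_convex hconv hint
  have hsi : s ⊆ closure (interior s) := by
    rw [hconv.closure_interior_eq_closure_of_nonempty_interior hint]
    exact subset_closure
  induction n generalizing f x with
  | zero => simpa [taylorSum_zero, multiPartialWithin_zero] using hbound 0 (by simp) x hx
  | succ n ih =>
    set L := ∑ k, |x k - a k|
    have hremainder : ∀ k, ∀ t ∈ Icc (0 : ℝ) 1,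
        |partialWithin s k f (a + t • (x - a)) -
          taylorSum n (fun β => multiPartialWithin d s β (partialWithin s k f) a) (t • (x - a))| ≤
          M * (t * L) ^ n / n.factorial := by
      intro k t ht
      have hfk : ContDiffOn ℝ n (partialWithin s k f) s :=
        contDiffOn_partialWithin hs (by exact_mod_cast hf) k
      have hbound_k : ∀ β : Fin d → ℕ, ∑ j, β j ≤ n → ∀ y ∈ s,
          |multiPartialWithin d s β (partialWithin s k f) y| ≤ M := fun β hβ y hy => by
        have hf' : ContDiffOn ℝ (∑ j, β j + 1 : ℕ) f s :=
          hf.of_le (by exact_mod_cast Nat.succ_le_succ hβ)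
        rw [← multiPartialWithin_add_single hs hsi β k hf' hy]
        exact hbound _ (by rw [sum_add_single]; omega) y hy
      have hdist : ∑ j, |(a + t • (x - a)) j - a j| = t * L := by
        simp [L, Finset.mul_sum, abs_mul, abs_of_nonneg ht.1]
      have := ih hfk hbound_k (hconv.add_smul_sub_mem ha hx ht)
      rwa [hdist, add_sub_cancel_left] at this
    have hmain := abs_le_of_abs_deriv_le_mul_pow (K := M * L ^ (n + 1) / n.factorial)
      (fun t ht => hasDerivWithinAt_taylorRemainder_segment hs hsi hconv hf ha hx ht)
      (by simp [taylorSum_succ_zero, multiPartialWithin_zero]) fun t ht => by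
        calc _ ≤ ∑ k, |x k - a k| * (M * (t * L) ^ n / n.factorial) := by
              refine (Finset.abs_sum_le_sum_abs _ _).trans (Finset.sum_le_sum fun k _ => ?_)
              rw [abs_mul]
              exact mul_le_mul_of_nonneg_left (hremainder k t ht) (abs_nonneg _)
          _ = M * L ^ (n + 1) / n.factorial * t ^ n := by
              rw [← Finset.sum_mul]
              ring
    rw [Nat.factorial_succ, Nat.cast_mul]
    simpa [div_div, mul_comm] using hmain

end

lemma unitCube_eq_pi (d : ℕ) : unitCube d = univ.pi fun _ => Icc 0 1 := by
  ext x
  simp [unitCube, Pi.le_def, forall_and]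

lemma convex_unitCube (d : ℕ) : Convex ℝ (unitCube d) := by
  rw [unitCube_eq_pi]
  exact convex_pi fun _ _ => convex_Icc 0 1

lemma interior_unitCube_nonempty (d : ℕ) : (interior (unitCube d)).Nonempty := by
  rw [unitCube_eq_pi, interior_pi_set finite_univ]
  exact ⟨fun _ => 1 / 2, by norm_num⟩

lemma node_mem_unitCube {d N : ℕ} (hN : 0 < N) {m : Fin d → ℕ}
    (hm : m ∈ Fintype.piFinset fun _ : Fin d => Finset.range (N + 1)) :
    (fun k => (m k : ℝ) / N) ∈ unitCube d := fun k => by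
  have hmk : m k ≤ N := Nat.lt_succ_iff.mp (Finset.mem_range.mp (Fintype.mem_piFinset.mp hm k))
  exact ⟨by positivity, div_le_one_of_le₀ (by exact_mod_cast hmk) (Nat.cast_nonneg N)⟩

lemma taylorPoly_eq_taylorSum (d n N : ℕ) (f : (Fin d → ℝ) → ℝ) (m : Fin d → ℕ)
    (x : Fin d → ℝ) :
    taylorPoly d n N f m x =
      taylorSum n (fun α => multiPartialWithin d (unitCube d) α f fun k => (m k : ℝ) / N)
        (x - fun k => (m k : ℝ) / N) := rfl

lemma abs_sub_sum_mul_le {ι : Type*} (t : Finset ι) {w P : ι → ℝ} {y C : ℝ}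
    (hw : ∀ i ∈ t, 0 ≤ w i) (hw_sum : ∑ i ∈ t, w i = 1)
    (hP : ∀ i ∈ t, w i ≠ 0 → |y - P i| ≤ C) :
    |y - ∑ i ∈ t, w i * P i| ≤ C := by
  have hy : y - ∑ i ∈ t, w i * P i = ∑ i ∈ t, w i * (y - P i) := by
    simp only [mul_sub, Finset.sum_sub_distrib, ← Finset.sum_mul, hw_sum, one_mul]
  calc |y - ∑ i ∈ t, w i * P i| ≤ ∑ i ∈ t, w i * |y - P i| := by
        rw [hy]
        refine (Finset.abs_sum_le_sum_abs _ _).trans_eq (Finset.sum_congr rfl fun i hi => ?_)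
        rw [abs_mul, abs_of_nonneg (hw i hi)]
    _ ≤ ∑ i ∈ t, w i * C := Finset.sum_le_sum fun i hi => by
        rcases eq_or_ne (w i) 0 with h | h
        · simp [h]
        · exact mul_le_mul_of_nonneg_left (hP i hi h) (hw i hi)
    _ = C := by rw [← Finset.sum_mul, hw_sum, one_mul]

lemma abs_sub_taylorPoly_le_of_phiBump_ne_zero {d n N : ℕ} (hN : 1 ≤ N)
    {f : (Fin d → ℝ) → ℝ} (hf : ContDiffOn ℝ n f (unitCube d))
    (hbound : ∀ α : Fin d → ℕ, ∑ k, α k ≤ n →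
      ∀ x ∈ unitCube d, |multiPartialWithin d (unitCube d) α f x| ≤ 1)
    {x : Fin d → ℝ} (hx : x ∈ unitCube d) {m : Fin d → ℕ}
    (hm : m ∈ Fintype.piFinset fun _ : Fin d => Finset.range (N + 1))
    (hφ : phiBump d N m x ≠ 0) :
    |f x - taylorPoly d n N f m x| ≤ (2 * d / (3 * N)) ^ n / n.factorial := by
  rw [taylorPoly_eq_taylorSum]
  refine (abs_sub_taylorSum_le (convex_unitCube d) (interior_unitCube_nonempty d) n hf hbound
    (node_mem_unitCube hN hm) hx).trans ?_
  rw [one_mul]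
  gcongr
  calc ∑ k, |x k - (m k : ℝ) / N| ≤ ∑ _k : Fin d, 2 / (3 * (N : ℝ)) :=
        Finset.sum_le_sum fun k _ => abs_sub_le_of_phiBump_ne_zero hφ k
    _ = 2 * d / (3 * N) := by
        rw [Finset.sum_const, Finset.card_univ, Fintype.card_fin, nsmul_eq_mul]
        ring

theorem local_taylor_error_general (d n N : ℕ) (hN : 1 ≤ N)
    (f : (Fin d → ℝ) → ℝ)
    (hf : ContDiffOn ℝ n f (unitCube d))
    (hbound : ∀ α : Fin d → ℕ, (∑ k, α k) ≤ n →
      ∀ x ∈ unitCube d, |multiPartialWithin d (unitCube d) α f x| ≤ 1) :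
    ∀ x ∈ unitCube d,
      |f x - localTaylor d n N f x| ≤
        2 ^ d * (d : ℝ) ^ n / (Nat.factorial n) / (N : ℝ) ^ n := by
  intro x hx
  have hN' : (0 : ℝ) < N := by exact_mod_cast hN
  calc |f x - localTaylor d n N f x| ≤ (2 * d / (3 * N)) ^ n / n.factorial :=
        abs_sub_sum_mul_le _ (fun m _ => phiBump_nonneg hN _ x) (sum_phiBump hN hx)
          fun m hm => abs_sub_taylorPoly_le_of_phiBump_ne_zero hN hf hbound hx hm
    _ ≤ (d / N) ^ n / n.factorial := by
        gcongr ?_ ^ n / _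
        rw [div_le_div_iff₀ (by positivity) hN']
        nlinarith [(Nat.cast_nonneg d : (0 : ℝ) ≤ d)]
    _ ≤ 2 ^ d * ((d / N) ^ n / n.factorial) :=
        le_mul_of_one_le_left (by positivity) (one_le_pow₀ one_le_two)
    _ = 2 ^ d * (d : ℝ) ^ n / (Nat.factorial n) / (N : ℝ) ^ n := by
        rw [div_pow]
        ring

/-- Error of the local Taylor approximation:
`max_{x ∈ [0,1]^d} |f(x) - f_N(x)| ≤ (2^d · d^n / n!) · N^{-n}`. -/
theorem local_taylor_error (d n N : ℕ) (hd : 1 ≤ d) (hn : 1 ≤ n) (hN : 1 ≤ N)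
    (f : (Fin d → ℝ) → ℝ)
    (hf : ContDiffOn ℝ n f (unitCube d))
    (hbound : ∀ α : Fin d → ℕ, (∑ k, α k) ≤ n →
      ∀ x ∈ unitCube d, |multiPartialWithin d (unitCube d) α f x| ≤ 1) :
    ∀ x ∈ unitCube d,
      |f x - localTaylor d n N f x| ≤
        2 ^ d * (d : ℝ) ^ n / (Nat.factorial n) / (N : ℝ) ^ n :=
  local_taylor_error_general d n N hN f hf hbound
end
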